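/- Let C be a k-algebra, B a subalgebra, and X a finite-dimensional B-subbimodule of C with C = B ⊕ X as B-bimodules. Then for every finite-dimensional indecomposable B-module N there exists a finite-dimensional indecomposable C-module M such that N is a direct summand of the restriction of M to B, and M can be chosen with dim_k M ≤ (1 + dim_k X)·dim_k N. -/

import Mathlib

/-!
Instead of the induced module `C ⊗_B N` we use the coinduced module `M₀ = Hom_B(C, N)`, which
serves equally well. As `C = B ⊕ X` as `B`-bimodules, the projection `π : C → B` along `X` is
`B`-bilinear, so `n ↦ (c ↦ π(c) • n)` and evaluation at `1` make `N` a `B`-direct summand of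
`M₀`; and a `B`-linear `f : C → N` is determined by `f 1` and `f` on `X`, so
`dim M₀ ≤ dim N + dim X · dim N`. Whenever a `C`-module `M` containing `N` as a `B`-summand
splits as `P ⊕ Q`, Fitting's lemma (`End_B N` is local) keeps `N` a `B`-summand of `P` or of
`Q`; descending on the dimension from `M₀` ends at an indecomposable `M`.
-/

section Framework

variable (k : Type) [Field k] (A : Type) [Ring A] [Algebra k A]

/-- A module over the `k`-algebra `A`, recorded as a `k`-vector space together with
an algebra map `A → End_k(V)`. -/
structure AlgRep where
  V : Type
  [acg : AddCommGroup V]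
  [mod : Module k V]
  ρ : A →ₐ[k] Module.End k V

attribute [instance] AlgRep.acg AlgRep.mod

variable {k A}

/-- An `A`-invariant subspace. -/
def AlgRep.IsInvt (R : AlgRep k A) (p : Submodule k R.V) : Prop :=
  ∀ a : A, p.map (R.ρ a) ≤ p

/-- Indecomposability: no nontrivial invariant direct-sum decomposition. -/
def AlgRep.Indec (R : AlgRep k A) : Prop :=
  Nontrivial R.V ∧ ∀ p q : Submodule k R.V, R.IsInvt p → R.IsInvt q → IsCompl p q →
    p = ⊥ ∨ q = ⊥

/-- Isomorphism of modules. -/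
structure AlgRep.Iso (R S : AlgRep k A) where
  e : R.V ≃ₗ[k] S.V
  comm : ∀ (a : A) (v : R.V), e (R.ρ a v) = S.ρ a (e v)

variable (k A)

/-- Finite representation type: finitely many isomorphism classes of
finite-dimensional indecomposable modules. -/
def FiniteRepType : Prop :=
  ∃ (m : ℕ) (F : Fin m → AlgRep k A), ∀ R : AlgRep k A,
    FiniteDimensional k R.V → R.Indec → ∃ i, Nonempty (R.Iso (F i))

/-- Tame representation type: for each dimension bound `d`, the finite-dimensional
indecomposable modules of dimension at most `d` fall, up to isomorphism and finitely
many exceptions, into finitely many one-parameter families.  (Finite type is a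
special case.) -/
def TameRepType : Prop :=
  ∀ d : ℕ, ∃ (m₁ m₂ : ℕ) (F : Fin m₁ → k → AlgRep k A) (Ex : Fin m₂ → AlgRep k A),
    ∀ R : AlgRep k A, FiniteDimensional k R.V → Module.finrank k R.V ≤ d → R.Indec →
      (∃ i lam, Nonempty (R.Iso (F i lam))) ∨ (∃ j, Nonempty (R.Iso (Ex j)))

end Framework


/-- The restriction of a `C`-module to a subalgebra `B`. -/
noncomputable def AlgRep.res {k C : Type} [Field k] [Ring C] [Algebra k C]
    (M : AlgRep k C) (B : Subalgebra k C) : AlgRep k ↥B :=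
  { V := M.V, ρ := M.ρ.comp B.val }

namespace AlgRep

variable {k A : Type} [Field k] [Ring A] [Algebra k A]

noncomputable def subrep (R : AlgRep k A) (p : Submodule k R.V) (hp : R.IsInvt p) :
    AlgRep k A where
  V := p
  ρ :=
    { toFun a := (R.ρ a).restrict fun x hx => hp a ⟨x, hx, rfl⟩
      map_one' := by ext; simp
      map_mul' a b := by ext; simp
      map_zero' := by ext; simp
      map_add' a b := by ext; simp
      commutes' r := by ext; simp [Module.algebraMap_end_apply] }

instance (R : AlgRep k A) [FiniteDimensional k R.V] (p : Submodule k R.V) (hp : R.IsInvt p) :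
    FiniteDimensional k (R.subrep p hp).V :=
  inferInstanceAs (FiniteDimensional k p)

def IsEquivariant (R S : AlgRep k A) (f : R.V →ₗ[k] S.V) : Prop :=
  ∀ (a : A) (v : R.V), f (R.ρ a v) = S.ρ a (f v)

theorem IsEquivariant.comp {R S T : AlgRep k A} {g : S.V →ₗ[k] T.V} {f : R.V →ₗ[k] S.V}
    (hg : IsEquivariant S T g) (hf : IsEquivariant R S f) : IsEquivariant R T (g ∘ₗ f) :=
  fun a v => by simp only [LinearMap.comp_apply, hf a v, hg a (f v)]

theorem IsEquivariant.pow {R : AlgRep k A} {f : Module.End k R.V} (hf : IsEquivariant R R f) :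
    ∀ n : ℕ, IsEquivariant R R (f ^ n)
  | 0 => fun _ _ => rfl
  | n + 1 => by rw [pow_succ, Module.End.mul_eq_comp]; exact (hf.pow n).comp hf

theorem IsEquivariant.isInvt_ker {R S : AlgRep k A} {f : R.V →ₗ[k] S.V}
    (hf : IsEquivariant R S f) : R.IsInvt (LinearMap.ker f) := by
  rintro a _ ⟨v, hv, rfl⟩
  simp_all [LinearMap.mem_ker, hf a v]

theorem IsEquivariant.isInvt_range {R S : AlgRep k A} {f : R.V →ₗ[k] S.V}
    (hf : IsEquivariant R S f) : S.IsInvt (LinearMap.range f) := by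
  rintro a _ ⟨_, ⟨v, rfl⟩, rfl⟩
  exact ⟨R.ρ a v, hf a v⟩

theorem isEquivariant_subtype (R : AlgRep k A) {p : Submodule k R.V} (hp : R.IsInvt p) :
    IsEquivariant (R.subrep p hp) R p.subtype :=
  fun _ _ => rfl

theorem isEquivariant_projectionOnto (R : AlgRep k A) {p q : Submodule k R.V}
    (hp : R.IsInvt p) (hq : R.IsInvt q) (hpq : IsCompl p q) :
    IsEquivariant R (R.subrep p hp) (p.projectionOnto q hpq) := by
  intro a v
  apply Subtype.ext
  change (p.projectionOnto q hpq (R.ρ a v) : R.V) = R.ρ a (p.projectionOnto q hpq v)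
  obtain ⟨x, y, rfl⟩ : ∃ x : p, ∃ y : q, (x : R.V) + y = v :=
    ⟨_, _, Submodule.projection_add_projection_eq_self hpq v⟩
  have hx : R.ρ a x ∈ p := hp a ⟨x, x.2, rfl⟩
  have hy : R.ρ a y ∈ q := hq a ⟨y, y.2, rfl⟩
  simp [Submodule.projectionOnto_apply_of_mem_left hpq hx,
    (Submodule.projectionOnto_apply_eq_zero_iff hpq).2 hy]

def IsRetract (N R : AlgRep k A) : Prop :=
  ∃ (i : N.V →ₗ[k] R.V) (r : R.V →ₗ[k] N.V),
    IsEquivariant N R i ∧ IsEquivariant R N r ∧ Function.LeftInverse r i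

theorem IsRetract.of_bijective {N R : AlgRep k A} {i : N.V →ₗ[k] R.V} {r : R.V →ₗ[k] N.V}
    (hi : IsEquivariant N R i) (hr : IsEquivariant R N r) (hri : Function.Bijective (r ∘ₗ i)) :
    N.IsRetract R := by
  set e := LinearEquiv.ofBijective _ hri
  have he : IsEquivariant N N e.symm := fun a v => e.injective <| by
    rw [LinearEquiv.coe_coe, e.apply_symm_apply]
    change N.ρ a v = (r ∘ₗ i) (N.ρ a (e.symm v))
    rw [hr.comp hi]
    exact congrArg (N.ρ a) (e.apply_symm_apply v).symm
  exact ⟨i, e.symm.toLinearMap ∘ₗ r, hi, he.comp hr, e.symm_apply_apply⟩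

theorem IsRetract.nontrivial {N R : AlgRep k A} (h : N.IsRetract R) [Nontrivial N.V] :
    Nontrivial R.V := by
  obtain ⟨i, r, -, -, hri⟩ := h
  exact hri.injective.nontrivial

theorem IsRetract.exists_isCompl {N R : AlgRep k A} (h : N.IsRetract R) :
    ∃ P Q : Submodule k R.V, R.IsInvt P ∧ R.IsInvt Q ∧ IsCompl P Q ∧
      ∃ e : N.V ≃ₗ[k] P, ∀ (a : A) (v : N.V), (e (N.ρ a v) : R.V) = R.ρ a (e v) := by
  obtain ⟨i, r, hi, hr, hri⟩ := h
  set e := LinearEquiv.ofLeftInverse hri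
  have hcompl : IsCompl (LinearMap.range i) (LinearMap.ker r) := by
    rw [← LinearEquiv.ker_comp e r]
    refine LinearMap.isCompl_of_proj fun ⟨_, v, hv⟩ => ?_
    subst hv
    exact Subtype.ext <| by simp [e, hri v]
  exact ⟨_, _, hi.isInvt_range, hr.isInvt_ker, hcompl, e, fun a v => hi a v⟩

/-- Fitting's lemma. -/
theorem Indec.isUnit_or_isNilpotent {N : AlgRep k A} [FiniteDimensional k N.V] (hN : N.Indec)
    {f : Module.End k N.V} (hf : IsEquivariant N N f) : IsUnit f ∨ IsNilpotent f := by
  obtain ⟨n, hcompl, hn⟩ :=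
    (f.eventually_isCompl_ker_pow_range_pow.and (Filter.eventually_ge_atTop 1)).exists
  rcases hN.2 _ _ (hf.pow n).isInvt_ker (hf.pow n).isInvt_range hcompl with hker | hrange
  · left
    have hinj : Function.Injective (f ^ n) := LinearMap.ker_eq_bot.1 hker
    rw [← isUnit_pow_iff (n := n) (by omega), Module.End.isUnit_iff]
    exact ⟨hinj, LinearMap.injective_iff_surjective.1 hinj⟩
  · exact .inr ⟨n, LinearMap.range_eq_bot.1 hrange⟩

/-- The composites `N → p → N` and `N → q → N` sum to the identity, so by Fitting's lemma
one of them is invertible. -/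
theorem Indec.isRetract_subrep_or {N R : AlgRep k A} [FiniteDimensional k N.V] (hN : N.Indec)
    (h : N.IsRetract R) {p q : Submodule k R.V} (hp : R.IsInvt p) (hq : R.IsInvt q)
    (hpq : IsCompl p q) : N.IsRetract (R.subrep p hp) ∨ N.IsRetract (R.subrep q hq) := by
  obtain ⟨i, r, hi, hr, hri⟩ := h
  have hip := (R.isEquivariant_projectionOnto hp hq hpq).comp hi
  have hiq := (R.isEquivariant_projectionOnto hq hp hpq.symm).comp hi
  have hrp := hr.comp (R.isEquivariant_subtype hp)
  have hrq := hr.comp (R.isEquivariant_subtype hq)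
  have hsum : (r ∘ₗ p.subtype) ∘ₗ (p.projectionOnto q hpq ∘ₗ i) +
      (r ∘ₗ q.subtype) ∘ₗ (q.projectionOnto p hpq.symm ∘ₗ i) = 1 := by
    ext v
    simp [← map_add, Submodule.projection_add_projection_eq_self hpq, hri v]
  rcases hN.isUnit_or_isNilpotent (hrp.comp hip) with hunit | hnil
  · exact .inl (.of_bijective hip hrp ((Module.End.isUnit_iff _).1 hunit))
  · have hunit : IsUnit ((r ∘ₗ q.subtype) ∘ₗ (q.projectionOnto p hpq.symm ∘ₗ i)) :=
      eq_sub_of_add_eq' hsum ▸ hnil.isUnit_one_sub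
    exact .inr (.of_bijective hiq hrq ((Module.End.isUnit_iff _).1 hunit))

end AlgRep

namespace Subalgebra

variable {k C : Type} [Field k] [Ring C] [Algebra k C] {B : Subalgebra k C} {X : Submodule k C}

noncomputable def projOfIsCompl (hcompl : IsCompl (Subalgebra.toSubmodule B) X) : C →ₗ[k] B :=
  (Subalgebra.toSubmodule B).projectionOnto X hcompl

variable (hcompl : IsCompl (Subalgebra.toSubmodule B) X)

theorem projOfIsCompl_add (b : B) {x : C} (hx : x ∈ X) : projOfIsCompl hcompl (b + x) = b := by
  simp [projOfIsCompl, Submodule.projectionOnto_apply_of_mem_left hcompl b.2,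
    (Submodule.projectionOnto_apply_eq_zero_iff hcompl).2 hx]

theorem exists_eq_projOfIsCompl_add (c : C) : ∃ x ∈ X, c = projOfIsCompl hcompl c + x :=
  ⟨_, Submodule.sub_projection_mem hcompl c, (add_sub_cancel _ c).symm⟩

theorem projOfIsCompl_one : projOfIsCompl hcompl 1 = 1 := by
  simpa using projOfIsCompl_add hcompl 1 X.zero_mem

theorem projOfIsCompl_mul_left (hX : ∀ b ∈ B, ∀ x ∈ X, b * x ∈ X) (b : B) (c : C) :
    projOfIsCompl hcompl (b * c) = b * projOfIsCompl hcompl c := by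
  obtain ⟨x, hx, hc⟩ := exists_eq_projOfIsCompl_add hcompl c
  conv_lhs => rw [hc, mul_add]
  exact projOfIsCompl_add hcompl (b * _) (hX b b.2 x hx)

theorem projOfIsCompl_mul_right (hX : ∀ b ∈ B, ∀ x ∈ X, x * b ∈ X) (c : C) (b : B) :
    projOfIsCompl hcompl (c * b) = projOfIsCompl hcompl c * b := by
  obtain ⟨x, hx, hc⟩ := exists_eq_projOfIsCompl_add hcompl c
  conv_lhs => rw [hc, add_mul]
  exact projOfIsCompl_add hcompl (_ * b) (hX b b.2 x hx)

end Subalgebra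

namespace AlgRep

variable {k C : Type} [Field k] [Ring C] [Algebra k C] {B : Subalgebra k C} {X : Submodule k C}

def coindSubmodule (N : AlgRep k B) : Submodule k (C →ₗ[k] N.V) where
  carrier := {f | ∀ (b : B) (c : C), f (b * c) = N.ρ b (f c)}
  add_mem' hf hg b c := by simp [hf b c, hg b c]
  zero_mem' b c := by simp
  smul_mem' r f hf b c := by simp [hf b c]

noncomputable def coindAction (N : AlgRep k B) (c : C) : Module.End k N.coindSubmodule :=
  (LinearMap.lcomp k N.V (LinearMap.mulRight k c)).restrict
    fun f hf b x => by simpa [mul_assoc] using hf b (x * c)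

@[simp]
theorem coindAction_apply_apply (N : AlgRep k B) (c : C) (f : N.coindSubmodule) (x : C) :
    (N.coindAction c f : C →ₗ[k] N.V) x = (f : C →ₗ[k] N.V) (x * c) :=
  rfl

/-- The coinduced module `Hom_B(C, N)`, on which `c` acts by `(c • f) x = f (x * c)`. -/
noncomputable def coind (N : AlgRep k B) : AlgRep k C where
  V := N.coindSubmodule
  ρ :=
    { toFun := N.coindAction
      map_one' := by ext; simp
      map_mul' a b := by ext; simp [mul_assoc]
      map_zero' := by ext; simp
      map_add' a b := by ext; simp [mul_add]
      commutes' r := by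
        ext
        simp [Module.algebraMap_end_apply, ← Algebra.commutes, ← Algebra.smul_def] }

theorem isRetract_coind_res (hcompl : IsCompl (Subalgebra.toSubmodule B) X)
    (hXl : ∀ b ∈ B, ∀ x ∈ X, b * x ∈ X) (hXr : ∀ b ∈ B, ∀ x ∈ X, x * b ∈ X) (N : AlgRep k B) :
    N.IsRetract (N.coind.res B) := by
  let π := Subalgebra.projOfIsCompl hcompl
  let i : N.V →ₗ[k] N.coindSubmodule := LinearMap.codRestrict _ (N.ρ.toLinearMap ∘ₗ π).flip
    fun v b c => by simp [π, Subalgebra.projOfIsCompl_mul_left hcompl hXl, Module.End.mul_apply]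
  let r : N.coindSubmodule →ₗ[k] N.V := LinearMap.applyₗ (1 : C) ∘ₗ N.coindSubmodule.subtype
  refine ⟨i, r, fun b v => ?_, fun b (f : N.coindSubmodule) => ?_, fun v => ?_⟩
  · refine Subtype.ext (LinearMap.ext fun c => ?_)
    change N.ρ (π c) (N.ρ b v) = N.ρ (π (c * b)) v
    rw [Subalgebra.projOfIsCompl_mul_right hcompl hXr, map_mul, Module.End.mul_apply]
  · change (f : C →ₗ[k] N.V) (1 * b) = N.ρ b ((f : C →ₗ[k] N.V) 1)
    simpa using f.2 b 1
  · change N.ρ (π 1) v = v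
    rw [Subalgebra.projOfIsCompl_one, map_one, Module.End.one_apply]

noncomputable def coindRestrict (X : Submodule k C) (N : AlgRep k B) :
    N.coind.V →ₗ[k] N.V × (X →ₗ[k] N.V) :=
  (LinearMap.applyₗ (1 : C)).prod (LinearMap.lcomp k N.V X.subtype) ∘ₗ N.coindSubmodule.subtype

theorem injective_coindRestrict (hcompl : IsCompl (Subalgebra.toSubmodule B) X)
    (N : AlgRep k B) : Function.Injective (N.coindRestrict X) := by
  refine (injective_iff_map_eq_zero _).2 fun (f : N.coindSubmodule) hf => ?_
  have hf1 : (f : C →ₗ[k] N.V) 1 = 0 := congrArg Prod.fst hf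
  have hfX : (f : C →ₗ[k] N.V) ∘ₗ X.subtype = 0 := congrArg Prod.snd hf
  refine Subtype.ext (LinearMap.ext fun c => ?_)
  obtain ⟨x, hx, hc⟩ := Subalgebra.exists_eq_projOfIsCompl_add hcompl c
  have hB : (f : C →ₗ[k] N.V) (Subalgebra.projOfIsCompl hcompl c) = 0 := by
    rw [← mul_one (Subalgebra.projOfIsCompl hcompl c : C), f.2, hf1, map_zero]
  have hX : (f : C →ₗ[k] N.V) x = 0 := LinearMap.congr_fun hfX ⟨x, hx⟩
  rw [hc, map_add, hB, hX, add_zero]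
  rfl

theorem finiteDimensional_coind (hcompl : IsCompl (Subalgebra.toSubmodule B) X)
    [FiniteDimensional k X] (N : AlgRep k B) [FiniteDimensional k N.V] :
    FiniteDimensional k N.coind.V :=
  Module.Finite.of_injective _ (injective_coindRestrict hcompl N)

theorem finrank_coind_le (hcompl : IsCompl (Subalgebra.toSubmodule B) X)
    [FiniteDimensional k X] (N : AlgRep k B) [FiniteDimensional k N.V] :
    Module.finrank k N.coind.V ≤ (1 + Module.finrank k X) * Module.finrank k N.V :=
  calc Module.finrank k N.coind.V ≤ Module.finrank k (N.V × (X →ₗ[k] N.V)) :=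
        LinearMap.finrank_le_finrank_of_injective (injective_coindRestrict hcompl N)
    _ = (1 + Module.finrank k X) * Module.finrank k N.V := by
        rw [Module.finrank_prod, Module.finrank_linearMap]
        ring

theorem IsInvt.res {R : AlgRep k C} {p : Submodule k R.V} (hp : R.IsInvt p) (B : Subalgebra k C) :
    (R.res B).IsInvt p :=
  fun b => hp b

theorem exists_indec_isRetract_res {N : AlgRep k B} [FiniteDimensional k N.V] (hN : N.Indec)
    (R : AlgRep k C) [FiniteDimensional k R.V] (h : N.IsRetract (R.res B)) :
    ∃ M : AlgRep k C, FiniteDimensional k M.V ∧ M.Indec ∧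
      Module.finrank k M.V ≤ Module.finrank k R.V ∧ N.IsRetract (M.res B) := by
  induction hn : Module.finrank k R.V using Nat.strong_induction_on generalizing R with
  | _ n ih =>
  by_cases hR : R.Indec
  · exact ⟨R, inferInstance, hR, hn.le, h⟩
  have : Nontrivial R.V := haveI := hN.1; h.nontrivial
  obtain ⟨p, q, hp, hq, hpq, hp0, hq0⟩ : ∃ p q : Submodule k R.V,
      R.IsInvt p ∧ R.IsInvt q ∧ IsCompl p q ∧ p ≠ ⊥ ∧ q ≠ ⊥ := by
    simpa [Indec, this] using hR
  have descend {p q : Submodule k R.V} (hp : R.IsInvt p) (hpq : IsCompl p q) (hq0 : q ≠ ⊥)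
      (hret : N.IsRetract ((R.subrep p hp).res B)) : ∃ M : AlgRep k C,
        FiniteDimensional k M.V ∧ M.Indec ∧ Module.finrank k M.V ≤ n ∧ N.IsRetract (M.res B) := by
    have hlt : Module.finrank k p < n :=
      hn ▸ Submodule.finrank_lt fun hp => hq0 (eq_bot_of_top_isCompl (hp ▸ hpq))
    obtain ⟨M, hM, hMi, hMn, hMret⟩ := ih _ hlt (R.subrep p hp) hret rfl
    exact ⟨M, hM, hMi, hMn.trans hlt.le, hMret⟩
  rcases hN.isRetract_subrep_or h (hp.res B) (hq.res B) hpq with h' | h'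
  exacts [descend hp hpq hq0 h', descend hq hpq.symm hp0 h']

end AlgRep

theorem indecomposable_summand_of_extension_for_cleaving
    {k C : Type} [Field k] [Ring C] [Algebra k C]
    (B : Subalgebra k C) (X : Submodule k C)
    (hbimod : ∀ b ∈ B, ∀ x ∈ X, b * x ∈ X ∧ x * b ∈ X)
    (hcompl : IsCompl (Subalgebra.toSubmodule B) X)
    [FiniteDimensional k ↥X]
    (N : AlgRep k ↥B) [FiniteDimensional k N.V] (hN : N.Indec) :
    ∃ M : AlgRep k C, FiniteDimensional k M.V ∧ M.Indec ∧
      Module.finrank k M.V ≤ (1 + Module.finrank k ↥X) * Module.finrank k N.V ∧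
      ∃ P Q : Submodule k M.V,
        (M.res B).IsInvt P ∧ (M.res B).IsInvt Q ∧ IsCompl P Q ∧
        ∃ e : N.V ≃ₗ[k] ↥P,
          ∀ (b : ↥B) (v : N.V), ((e (N.ρ b v)) : M.V) = M.ρ (b : C) (e v : M.V) := by
  have := AlgRep.finiteDimensional_coind hcompl N
  obtain ⟨M, hM, hMi, hMn, hret⟩ := AlgRep.exists_indec_isRetract_res hN N.coind
    (AlgRep.isRetract_coind_res hcompl (fun b hb x hx => (hbimod b hb x hx).1)
      (fun b hb x hx => (hbimod b hb x hx).2) N)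
  exact ⟨M, hM, hMi, hMn.trans (AlgRep.finrank_coind_le hcompl N), hret.exists_isCompl⟩
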